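/- Let p be a prime, s ≥ 1 a natural number, k a natural number, and n₁, …, n_s natural numbers with k ≤ n_i for every i. Then, in ℚ_p, the sequence N ↦ (1/p^N) · ∑_{x=0}^{p^N − 1} ∏_{i=1}^{s} B_{k,n_i}(x) tends (as N → ∞) to the rational number (∏_{i=1}^{s} C(n_i, k)) · ∑_{l=0}^{n₁+⋯+n_s − s·k} C(n₁+⋯+n_s − s·k, l) (−1)^l B_{s·k+l}, cast into ℚ_p. (Equivalently, ∫_{ℤ_p} B_{k,n₁}(x) B_{k,n₂}(x) ⋯ B_{k,n_s}(x) dμ₁(x) = C(n₁,k)⋯C(n_s,k) ∑_{l=0}^{n₁+⋯+n_s−sk} C(n₁+⋯+n_s−sk, l)(−1)^l B_{sk+l}.) -/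

import Mathlib

/-!
Writing `M = ∑ (nᵢ - k)`, the product of Bernstein polynomials is `∏ C(nᵢ,k) · x^(sk) (1 - x)^M`, and
the binomial theorem makes it a combination of the monomials `x^(sk+l)`; Volkenborn sums are linear.
For a monomial, Faulhaber's formula gives `(1/n) ∑_{x<n} x^m = B_m + (terms in n^j, j ≥ 1)`, and at
`n = p^N` these terms tend to `0` in `ℚ_p`, leaving `B_m`.
-/

open Finset Filter Topology

theorem one_sub_pow_eq_sum {R : Type*} [CommRing R] (x : R) (M : ℕ) :
    (1 - x) ^ M = ∑ l ∈ range (M + 1), (M.choose l : R) * (-1) ^ l * x ^ l := by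
  rw [sub_eq_neg_add, add_pow]
  refine sum_congr rfl fun l _ => ?_
  rw [neg_pow, one_pow]
  ring

theorem prod_choose_mul_pow_mul_one_sub_pow {ι R : Type*} [CommRing R] (t : Finset ι)
    (n : ι → ℕ) (k : ℕ) (x : R) :
    ∏ i ∈ t, ((n i).choose k : R) * x ^ k * (1 - x) ^ (n i - k)
      = (∏ i ∈ t, ((n i).choose k : R)) * ∑ l ∈ range (∑ i ∈ t, (n i - k) + 1),
          ((∑ i ∈ t, (n i - k)).choose l : R) * (-1) ^ l * x ^ (#t * k + l) := by
  rw [prod_mul_distrib, prod_mul_distrib, prod_const, prod_pow_eq_pow_sum, one_sub_pow_eq_sum,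
    mul_assoc, mul_sum]
  exact congrArg _ (sum_congr rfl fun l _ => by ring)

theorem one_div_mul_sum_range_pow (n m : ℕ) (hn : n ≠ 0) :
    (1 / (n : ℚ)) * ∑ x ∈ range n, (x : ℚ) ^ m
      = bernoulli m + ∑ i ∈ range m,
          bernoulli i * (m + 1).choose i / (m + 1) * (n : ℚ) ^ (m - i) := by
  have hn' : (n : ℚ) ≠ 0 := by exact_mod_cast hn
  rw [sum_range_pow, sum_range_succ, mul_add, add_comm, mul_sum, Nat.choose_succ_self_right,
    Nat.add_sub_cancel_left]
  congr 1
  · field_simp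
    push_cast
    ring
  · refine sum_congr rfl fun i hi => ?_
    rw [show m + 1 - i = m - i + 1 by have := mem_range.mp hi; omega, pow_succ]
    field_simp

section Volkenborn

variable {p : ℕ} [Fact p.Prime]

noncomputable def volkenbornSum (f : ℕ → ℚ_[p]) (N : ℕ) : ℚ_[p] :=
  1 / (p : ℚ_[p]) ^ N * ∑ x ∈ range (p ^ N), f x

theorem volkenbornSum_sum {ι : Type*} (t : Finset ι) (c : ι → ℚ_[p]) (f : ι → ℕ → ℚ_[p]) (N : ℕ) :
    volkenbornSum (fun x => ∑ l ∈ t, c l * f l x) N = ∑ l ∈ t, c l * volkenbornSum (f l) N := by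
  simp only [volkenbornSum, mul_sum]
  rw [sum_comm]
  exact sum_congr rfl fun _ _ => sum_congr rfl fun _ _ => by ring

theorem volkenbornSum_pow_eq (m N : ℕ) :
    volkenbornSum (fun x => (x : ℚ_[p]) ^ m) N
      = bernoulli m + ∑ i ∈ range m,
          (bernoulli i : ℚ_[p]) * (m + 1).choose i / (m + 1) * ((p : ℚ_[p]) ^ (m - i)) ^ N := by
  have h := congrArg (Rat.cast (K := ℚ_[p]))
    (one_div_mul_sum_range_pow (p ^ N) m (pow_ne_zero N (Fact.out : p.Prime).ne_zero))
  push_cast at h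
  rw [volkenbornSum, h]
  simp only [← pow_mul, mul_comm N]

theorem tendsto_volkenbornSum_pow (m : ℕ) :
    Tendsto (volkenbornSum (fun x => (x : ℚ_[p]) ^ m)) atTop (𝓝 (bernoulli m : ℚ_[p])) := by
  simp_rw [funext (volkenbornSum_pow_eq (p := p) m)]
  have hp : ‖(p : ℚ_[p])‖ < 1 := Padic.norm_p_lt_one
  have hterms : ∀ i ∈ range m, Tendsto (fun N => (bernoulli i : ℚ_[p]) * (m + 1).choose i /
      (m + 1) * ((p : ℚ_[p]) ^ (m - i)) ^ N) atTop (𝓝 0) := fun i hi => by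
    rw [← mul_zero ((bernoulli i : ℚ_[p]) * (m + 1).choose i / (m + 1))]
    refine (tendsto_pow_atTop_nhds_zero_of_norm_lt_one ?_).const_mul _
    rw [norm_pow]
    exact pow_lt_one₀ (norm_nonneg _) hp (by have := mem_range.mp hi; omega)
  simpa using tendsto_const_nhds.add (tendsto_finsetSum _ hterms)

end Volkenborn

theorem volkenborn_bernstein_prod_general (p : ℕ) [Fact p.Prime] (s : ℕ) (k : ℕ)
    (n : Fin s → ℕ) (hk : ∀ i, k ≤ n i) :
    Filter.Tendsto
      (fun N : ℕ => (1 / (p : ℚ_[p]) ^ N) *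
        ∑ x ∈ Finset.range (p ^ N), ∏ i : Fin s,
          ((n i).choose k : ℚ_[p]) * (x : ℚ_[p]) ^ k * (1 - (x : ℚ_[p])) ^ (n i - k))
      Filter.atTop
      (nhds (((∏ i : Fin s, ((n i).choose k : ℚ)) *
        ∑ l ∈ Finset.range ((∑ i : Fin s, n i) - s * k + 1),
          (((∑ i : Fin s, n i) - s * k).choose l : ℚ) * (-1 : ℚ) ^ l *
            bernoulli (s * k + l) : ℚ) : ℚ_[p])) := by
  set M := (∑ i : Fin s, n i) - s * k
  have hM : ∑ i : Fin s, (n i - k) = M := by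
    rw [sum_tsub_distrib _ fun i _ => hk i, sum_const, card_univ, Fintype.card_fin, smul_eq_mul]
  set c : ℕ → ℚ_[p] := fun l => (∏ i : Fin s, ((n i).choose k : ℚ_[p])) * M.choose l * (-1) ^ l
  have hseq : ∀ N, (1 / (p : ℚ_[p]) ^ N) * ∑ x ∈ range (p ^ N), ∏ i : Fin s,
        ((n i).choose k : ℚ_[p]) * (x : ℚ_[p]) ^ k * (1 - (x : ℚ_[p])) ^ (n i - k)
      = ∑ l ∈ range (M + 1), c l * volkenbornSum (fun x => (x : ℚ_[p]) ^ (s * k + l)) N := by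
    intro N
    rw [← volkenbornSum_sum, volkenbornSum]
    refine congrArg _ (sum_congr rfl fun x _ => ?_)
    rw [prod_choose_mul_pow_mul_one_sub_pow, hM, card_univ, Fintype.card_fin, mul_sum]
    simp only [c, mul_assoc]
  have hlim := tendsto_finsetSum (range (M + 1)) fun l _ =>
    (tendsto_volkenbornSum_pow (p := p) (s * k + l)).const_mul (c l)
  convert hlim using 1
  · exact funext hseq
  · push_cast
    simp only [c, mul_sum, mul_assoc]

/-- `∫_{ℤ_p} B_{k,n₁}(x) ⋯ B_{k,n_s}(x) dμ₁(x)
    = C(n₁,k)⋯C(n_s,k) ∑_{l=0}^{n₁+⋯+n_s−sk} C(n₁+⋯+n_s−sk,l)(−1)^l B_{sk+l}`. -/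
theorem volkenborn_bernstein_prod (p : ℕ) [Fact p.Prime] (s : ℕ) (hs : 1 ≤ s) (k : ℕ)
    (n : Fin s → ℕ) (hk : ∀ i, k ≤ n i) :
    Filter.Tendsto
      (fun N : ℕ => (1 / (p : ℚ_[p]) ^ N) *
        ∑ x ∈ Finset.range (p ^ N), ∏ i : Fin s,
          ((n i).choose k : ℚ_[p]) * (x : ℚ_[p]) ^ k * (1 - (x : ℚ_[p])) ^ (n i - k))
      Filter.atTop
      (nhds (((∏ i : Fin s, ((n i).choose k : ℚ)) *
        ∑ l ∈ Finset.range ((∑ i : Fin s, n i) - s * k + 1),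
          (((∑ i : Fin s, n i) - s * k).choose l : ℚ) * (-1 : ℚ) ^ l *
            bernoulli (s * k + l) : ℚ) : ℚ_[p])) :=
  volkenborn_bernstein_prod_general p s k n hk
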